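/- arXiv:2106.11147 — 4 statements merged into one kernel-verified Lean document; each statement's English description precedes it below -/
import Mathlib

section
/- For every real number z > 0, one has sqrt(z) = (1/sqrt(2π)) ∫₀^∞ (1 - exp(-z t / 2)) t^{-3/2} dt. -/
/-!
Integrating by parts with `u = 1 - exp (-(a t))` and `v = t ^ s / s` turns
`∫₀^∞ (1 - exp (-(a t))) t ^ (s - 1) dt`, for `-1 < s < 0`, into the Gamma integral
`-(a / s) ∫₀^∞ t ^ s exp (-(a t)) dt = -Γ(s) a ^ (-s)`. The boundary terms vanish because
`0 ≤ 1 - exp (-(a t)) ≤ min (a t) 1`. Berry's identity is the case `s = -1/2`, `a = z/2`,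
where `Γ(-1/2) = -2√π`.
-/

open MeasureTheory Set Filter Topology Real

namespace Real

variable {a s t : ℝ}

lemma one_sub_exp_neg_nonneg {x : ℝ} (hx : 0 ≤ x) : 0 ≤ 1 - exp (-x) := by
  linarith [exp_le_one_iff.mpr (neg_nonpos.mpr hx)]

lemma one_sub_exp_neg_le_self (x : ℝ) : 1 - exp (-x) ≤ x := by
  linarith [add_one_le_exp (-x)]

lemma one_sub_exp_neg_le_one (x : ℝ) : 1 - exp (-x) ≤ 1 := by
  linarith [exp_pos (-x)]

lemma one_sub_exp_neg_mul_mul_rpow_nonneg (ha : 0 ≤ a) (ht : 0 ≤ t) (s : ℝ) :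
    0 ≤ (1 - exp (-(a * t))) * t ^ s :=
  mul_nonneg (one_sub_exp_neg_nonneg (mul_nonneg ha ht)) (rpow_nonneg ht s)

lemma one_sub_exp_neg_mul_mul_rpow_le_rpow (ht : 0 ≤ t) (s : ℝ) :
    (1 - exp (-(a * t))) * t ^ s ≤ t ^ s :=
  mul_le_of_le_one_left (rpow_nonneg ht s) (one_sub_exp_neg_le_one _)

lemma one_sub_exp_neg_mul_mul_rpow_le_mul_rpow_add_one (ht : 0 < t) (s : ℝ) :
    (1 - exp (-(a * t))) * t ^ s ≤ a * t ^ (s + 1) :=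
  calc (1 - exp (-(a * t))) * t ^ s ≤ a * t * t ^ s :=
        mul_le_mul_of_nonneg_right (one_sub_exp_neg_le_self _) (rpow_nonneg ht.le s)
    _ = a * t ^ (s + 1) := by rw [rpow_add_one ht.ne', mul_assoc, mul_comm t]

lemma integrableOn_one_sub_exp_neg_mul_mul_rpow (ha : 0 ≤ a) (hs₁ : -1 < s) (hs₀ : s < 0) :
    IntegrableOn (fun t ↦ (1 - exp (-(a * t))) * t ^ (s - 1)) (Ioi 0) := by
  have hcont : ContinuousOn (fun t ↦ (1 - exp (-(a * t))) * t ^ (s - 1)) (Ioi 0) :=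
    fun t ht ↦ ((by fun_prop : Continuous fun t ↦ 1 - exp (-(a * t))).continuousAt.mul
      (continuousAt_rpow_const t _ (Or.inl (ne_of_gt ht)))).continuousWithinAt
  rw [← Ioc_union_Ioi_eq_Ioi zero_le_one, integrableOn_union]
  constructor
  · have hdom : IntegrableOn (fun t ↦ a * t ^ s) (Ioc 0 1) :=
      (intervalIntegral.intervalIntegrable_rpow' (a := 0) (b := 1) hs₁).1.const_mul a
    refine hdom.mono' ((hcont.mono Ioc_subset_Ioi_self).aestronglyMeasurable measurableSet_Ioc) ?_
    filter_upwards [ae_restrict_mem measurableSet_Ioc] with t ht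
    rw [norm_of_nonneg (one_sub_exp_neg_mul_mul_rpow_nonneg ha ht.1.le _)]
    simpa using one_sub_exp_neg_mul_mul_rpow_le_mul_rpow_add_one ht.1 (s - 1)
  · refine (integrableOn_Ioi_rpow_of_lt (a := s - 1) (by linarith) zero_lt_one).mono'
      ((hcont.mono (Ioi_subset_Ioi zero_le_one)).aestronglyMeasurable measurableSet_Ioi) ?_
    filter_upwards [ae_restrict_mem measurableSet_Ioi] with t ht
    have ht₀ : 0 ≤ t := zero_le_one.trans ht.le
    rw [norm_of_nonneg (one_sub_exp_neg_mul_mul_rpow_nonneg ha ht₀ _)]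
    exact one_sub_exp_neg_mul_mul_rpow_le_rpow ht₀ _

lemma tendsto_one_sub_exp_neg_mul_mul_rpow_nhdsGT_zero (ha : 0 ≤ a) (hs : -1 < s) :
    Tendsto (fun t ↦ (1 - exp (-(a * t))) * t ^ s) (𝓝[>] 0) (𝓝 0) := by
  have hlim : Tendsto (fun t : ℝ ↦ a * t ^ (s + 1)) (𝓝[>] 0) (𝓝 0) := by
    have := (tendsto_nhdsWithin_of_tendsto_nhds (s := Ioi 0)
      (continuousAt_rpow_const 0 (s + 1) (Or.inr (by linarith))).tendsto).const_mul a
    simpa [zero_rpow (by linarith : s + 1 ≠ 0)] using this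
  refine squeeze_zero' ?_ ?_ hlim <;> filter_upwards [self_mem_nhdsWithin] with t ht
  · exact one_sub_exp_neg_mul_mul_rpow_nonneg ha (le_of_lt ht) s
  · exact one_sub_exp_neg_mul_mul_rpow_le_mul_rpow_add_one ht s

lemma tendsto_one_sub_exp_neg_mul_mul_rpow_atTop (ha : 0 ≤ a) (hs : s < 0) :
    Tendsto (fun t ↦ (1 - exp (-(a * t))) * t ^ s) atTop (𝓝 0) := by
  have hlim : Tendsto (fun t : ℝ ↦ t ^ s) atTop (𝓝 0) := by
    simpa using tendsto_rpow_neg_atTop (neg_pos.mpr hs)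
  refine squeeze_zero' ?_ ?_ hlim <;> filter_upwards [eventually_ge_atTop 0] with t ht
  · exact one_sub_exp_neg_mul_mul_rpow_nonneg ha ht s
  · exact one_sub_exp_neg_mul_mul_rpow_le_rpow ht s

theorem integral_one_sub_exp_neg_mul_mul_rpow (ha : 0 < a) (hs₁ : -1 < s) (hs₀ : s < 0) :
    ∫ t in Ioi 0, (1 - exp (-(a * t))) * t ^ (s - 1) = -(Gamma s * a ^ (-s)) := by
  have hu : ∀ t ∈ Ioi (0 : ℝ),
      HasDerivAt (fun t ↦ 1 - exp (-(a * t))) (a * exp (-(a * t))) t := fun t _ ↦ by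
    simpa [mul_comm] using (((hasDerivAt_id t).const_mul a).neg.exp).const_sub 1
  have hv : ∀ t ∈ Ioi (0 : ℝ), HasDerivAt (fun t ↦ t ^ s / s) (t ^ (s - 1)) t := fun t ht ↦ by
    simpa [hs₀.ne] using (hasDerivAt_rpow_const (p := s) (Or.inl (ne_of_gt ht))).div_const s
  have hu'v : IntegrableOn (fun t ↦ a * exp (-(a * t)) * (t ^ s / s)) (Ioi 0) := by
    have hGammaIntegrand := integrableOn_rpow_mul_exp_neg_mul_rpow hs₁ zero_lt_one ha
    refine IntegrableOn.congr_fun (hGammaIntegrand.const_mul (a / s)) (fun t _ ↦ ?_)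
      measurableSet_Ioi
    simp only [rpow_one, neg_mul]
    ring
  have hboundary (l : Filter ℝ) (hl : Tendsto (fun t ↦ (1 - exp (-(a * t))) * t ^ s) l (𝓝 0)) :
      Tendsto ((fun t ↦ 1 - exp (-(a * t))) * fun t ↦ t ^ s / s) l (𝓝 0) := by
    have := hl.div_const s
    rw [zero_div] at this
    exact this.congr fun t ↦ mul_div_assoc _ _ _
  rw [integral_Ioi_mul_deriv_eq_deriv_mul hu hv
    (integrableOn_one_sub_exp_neg_mul_mul_rpow ha.le hs₁ hs₀) hu'v
    (hboundary _ (tendsto_one_sub_exp_neg_mul_mul_rpow_nhdsGT_zero ha.le hs₁))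
    (hboundary _ (tendsto_one_sub_exp_neg_mul_mul_rpow_atTop ha.le hs₀))]
  have hGamma : ∫ t in Ioi 0, a * exp (-(a * t)) * (t ^ s / s)
      = a / s * ∫ t in Ioi 0, t ^ ((s + 1) - 1) * exp (-(a * t)) := by
    rw [← integral_const_mul]
    refine setIntegral_congr_fun measurableSet_Ioi (fun t _ ↦ ?_)
    simp only [add_sub_cancel_right]
    ring
  rw [sub_self, zero_sub, hGamma, integral_rpow_mul_exp_neg_mul_Ioi (by linarith) ha,
    Gamma_add_one hs₀.ne, one_div, inv_rpow ha.le, rpow_add ha, rpow_one, rpow_neg ha.le]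
  field_simp [hs₀.ne]

lemma Gamma_neg_one_half_eq : Gamma (-1 / 2) = -2 * √π := by
  have := Gamma_add_one (s := -1 / 2) (by norm_num)
  rw [show (-1 / 2 : ℝ) + 1 = 1 / 2 by norm_num, Gamma_one_half_eq] at this
  linarith

end Real

/-- Berry's integral identity: for every real `z > 0`,
`√z = (1/√(2π)) ∫₀^∞ (1 - exp(-z t / 2)) t^{-3/2} dt`. -/
theorem berry_integral_identity (z : ℝ) (hz : 0 < z) :
    Real.sqrt z =
      (1 / Real.sqrt (2 * Real.pi)) *
        ∫ t in Set.Ioi (0 : ℝ), (1 - Real.exp (-z * t / 2)) * t ^ (-(3 : ℝ) / 2) := by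
  have hintegrand : (fun t ↦ (1 - exp (-z * t / 2)) * t ^ (-(3 : ℝ) / 2))
      = fun t ↦ (1 - exp (-(z / 2 * t))) * t ^ ((-1 / 2 : ℝ) - 1) := by
    ext t
    rw [show (-1 / 2 : ℝ) - 1 = -3 / 2 by norm_num, show -z * t / 2 = -(z / 2 * t) by ring]
  rw [hintegrand, integral_one_sub_exp_neg_mul_mul_rpow (half_pos hz) (by norm_num) (by norm_num),
    Gamma_neg_one_half_eq, show -(-1 / 2 : ℝ) = 1 / 2 by norm_num, ← sqrt_eq_rpow,
    sqrt_div' _ zero_le_two, sqrt_mul zero_le_two]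
  field_simp
  norm_num
end

section
/- For every positive real α and every positive integer d, ∫₀^∞ (1 - (1 + α t)^{-d/2}) t^{-3/2} dt = sqrt(4πα) · Γ((d+1)/2) / Γ(d/2). -/
/-!
Integrating by parts against `-2 t^{-1/2}` turns `∫₀^∞ (1 - (1 + t)^{-p}) t^{-3/2} dt`
into `2p ∫₀^∞ t^{-1/2} (1 + t)^{-p-1} dt = 2p B(1/2, p + 1/2) = 2 √π Γ(p + 1/2) / Γ(p)`,
the beta integral over `(0, ∞)` being the classical one over `(0, 1)` after `x ↦ x / (1 - x)`.
The substitution `t ↦ α t` contributes the factor `√α`, and `p = d / 2`.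
-/

open MeasureTheory Real Set Filter Topology

section Beta

variable {a b : ℝ}

theorem ofReal_rpow_mul_one_sub_rpow {x : ℝ} (hx : x ∈ Ioo (0 : ℝ) 1) :
    ((x ^ (a - 1) * (1 - x) ^ (b - 1) : ℝ) : ℂ) =
      (x : ℂ) ^ ((a : ℂ) - 1) * (1 - (x : ℂ)) ^ ((b : ℂ) - 1) := by
  push_cast [Complex.ofReal_cpow hx.1.le, Complex.ofReal_cpow (sub_nonneg.2 hx.2.le)]
  rfl

theorem integrableOn_Ioo_rpow_mul_one_sub_rpow (ha : 0 < a) (hb : 0 < b) :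
    IntegrableOn (fun x : ℝ => x ^ (a - 1) * (1 - x) ^ (b - 1)) (Ioo 0 1) := by
  have h := (intervalIntegrable_iff_integrableOn_Ioo_of_le zero_le_one).mp
    (Complex.betaIntegral_convergent (u := a) (v := b) (by simpa) (by simpa))
  exact IntegrableOn.congr_fun h.re
    (fun x hx => by simp [← ofReal_rpow_mul_one_sub_rpow hx]) measurableSet_Ioo

theorem integral_Ioo_rpow_mul_one_sub_rpow (ha : 0 < a) (hb : 0 < b) :
    ∫ x in Ioo (0 : ℝ) 1, x ^ (a - 1) * (1 - x) ^ (b - 1) =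
      Gamma a * Gamma b / Gamma (a + b) := by
  have h := Complex.Gamma_mul_Gamma_eq_betaIntegral (s := a) (t := b) (by simpa) (by simpa)
  rw [Complex.betaIntegral, intervalIntegral.integral_of_le zero_le_one,
    integral_Ioc_eq_integral_Ioo, ← setIntegral_congr_fun measurableSet_Ioo
      (fun x hx => ofReal_rpow_mul_one_sub_rpow hx), integral_complex_ofReal,
    ← Complex.ofReal_add, Complex.Gamma_ofReal, Complex.Gamma_ofReal, Complex.Gamma_ofReal] at h
  rw [eq_div_iff (Gamma_pos_of_pos (add_pos ha hb)).ne', mul_comm]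
  exact_mod_cast h.symm

theorem hasDerivAt_div_one_sub {x : ℝ} (hx : x ≠ 1) :
    HasDerivAt (fun y : ℝ => y / (1 - y)) ((1 - x) ^ 2)⁻¹ x := by
  have h : 1 - x ≠ 0 := sub_ne_zero.2 hx.symm
  exact ((hasDerivAt_id x).div ((hasDerivAt_const x 1).sub (hasDerivAt_id x)) h).congr_deriv
    (by simp only [id, Pi.sub_apply]; field_simp; ring)

theorem bijOn_div_one_sub : BijOn (fun x : ℝ => x / (1 - x)) (Ioo 0 1) (Ioi 0) := by
  refine InvOn.bijOn (f' := fun t => t / (1 + t)) ⟨fun x hx => ?_, fun t ht => ?_⟩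
    (fun x hx => ?_) (fun t ht => ?_)
  · have : 1 - x ≠ 0 := by linarith [hx.2]
    field_simp
    ring
  · have : 1 + t ≠ 0 := by linarith [ht.out]
    field_simp
    ring
  · exact div_pos hx.1 (by linarith [hx.2])
  · have ht : 0 < t := ht
    exact ⟨by positivity, (div_lt_one (by positivity)).2 (by linarith)⟩

theorem abs_deriv_smul_rpow_mul_one_add_rpow {x : ℝ} (hx : x ∈ Ioo (0 : ℝ) 1) :
    |((1 - x) ^ 2)⁻¹| • ((x / (1 - x)) ^ (a - 1) * (1 + x / (1 - x)) ^ (-(a + b))) =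
      x ^ (a - 1) * (1 - x) ^ (b - 1) := by
  have hx' : 0 < 1 - x := by linarith [hx.2]
  have h1 : 1 + x / (1 - x) = (1 - x)⁻¹ := by field_simp; ring
  have h2 : (1 - x) ^ (b - 1) = (1 - x) ^ (a + b) / (1 - x) ^ (a - 1) / (1 - x) ^ (2 : ℝ) := by
    rw [← rpow_sub hx', ← rpow_sub hx']
    ring_nf
  rw [h1, h2, smul_eq_mul, abs_of_pos (by positivity), div_rpow hx.1.le hx'.le,
    inv_rpow hx'.le, rpow_neg hx'.le, inv_inv, rpow_two]
  ring

theorem integrableOn_Ioi_rpow_mul_one_add_rpow (ha : 0 < a) (hb : 0 < b) :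
    IntegrableOn (fun t : ℝ => t ^ (a - 1) * (1 + t) ^ (-(a + b))) (Ioi 0) := by
  rw [← bijOn_div_one_sub.image_eq, integrableOn_image_iff_integrableOn_abs_deriv_smul
    measurableSet_Ioo (fun x hx => (hasDerivAt_div_one_sub hx.2.ne).hasDerivWithinAt)
    bijOn_div_one_sub.injOn]
  exact (integrableOn_Ioo_rpow_mul_one_sub_rpow ha hb).congr_fun
    (fun x hx => (abs_deriv_smul_rpow_mul_one_add_rpow hx).symm) measurableSet_Ioo

theorem integral_Ioi_rpow_mul_one_add_rpow (ha : 0 < a) (hb : 0 < b) :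
    ∫ t in Ioi (0 : ℝ), t ^ (a - 1) * (1 + t) ^ (-(a + b)) =
      Gamma a * Gamma b / Gamma (a + b) := by
  rw [← bijOn_div_one_sub.image_eq, integral_image_eq_integral_abs_deriv_smul
    measurableSet_Ioo (fun x hx => (hasDerivAt_div_one_sub hx.2.ne).hasDerivWithinAt)
    bijOn_div_one_sub.injOn, setIntegral_congr_fun measurableSet_Ioo
      (fun x hx => abs_deriv_smul_rpow_mul_one_add_rpow hx)]
  exact integral_Ioo_rpow_mul_one_sub_rpow ha hb

end Beta

section

variable {p t : ℝ}

theorem one_sub_one_add_rpow_neg_nonneg (hp : 0 ≤ p) (ht : 0 ≤ t) : 0 ≤ 1 - (1 + t) ^ (-p) :=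
  sub_nonneg.2 (rpow_le_one_of_one_le_of_nonpos (by linarith) (by linarith))

theorem one_sub_one_add_rpow_neg_le_one (ht : -1 ≤ t) : 1 - (1 + t) ^ (-p) ≤ 1 :=
  sub_le_self _ (rpow_nonneg (by linarith) _)

theorem one_sub_one_add_rpow_neg_le_mul (hp : 0 ≤ p) (ht : 0 ≤ t) :
    1 - (1 + t) ^ (-p) ≤ p * t := by
  have h1t : 0 < 1 + t := by linarith
  have hlog : log (1 + t) ≤ t := by linarith [log_le_sub_one_of_pos h1t]
  calc 1 - (1 + t) ^ (-p) ≤ 1 - (log (1 + t) * -p + 1) := by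
        rw [rpow_def_of_pos h1t]; linarith [add_one_le_exp (log (1 + t) * -p)]
    _ ≤ p * t := by nlinarith

theorem hasDerivAt_one_sub_one_add_rpow_neg (ht : -1 < t) :
    HasDerivAt (fun t : ℝ => 1 - (1 + t) ^ (-p)) (p * (1 + t) ^ (-p - 1)) t := by
  have h := ((hasDerivAt_id t).const_add 1).rpow_const (p := -p)
    (Or.inl (by simp only [id]; linarith))
  exact ((hasDerivAt_const t 1).sub h).congr_deriv (by simp only [id]; ring)

end

theorem integrableOn_one_sub_one_add_rpow_neg_mul_rpow {p : ℝ} (hp : 0 ≤ p) :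
    IntegrableOn (fun t : ℝ => (1 - (1 + t) ^ (-p)) * t ^ (-(3 : ℝ) / 2)) (Ioi 0) := by
  have hg := (integrableOn_Ioi_rpow_mul_one_add_rpow (a := 1 / 2) (b := 1 / 2)
    (by norm_num) (by norm_num)).const_mul (p + 1)
  refine hg.mono' (by fun_prop) ?_
  filter_upwards [ae_restrict_mem measurableSet_Ioi] with t (ht : 0 < t)
  have hu := one_sub_one_add_rpow_neg_nonneg hp ht.le
  -- `min (p t) 1 ≤ (p + 1) t / (1 + t)` makes the integrand a beta integrand
  have hbound : (1 - (1 + t) ^ (-p)) * (1 + t) ≤ (p + 1) * t := by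
    nlinarith [one_sub_one_add_rpow_neg_le_mul hp ht.le,
      one_sub_one_add_rpow_neg_le_one (p := p) (by linarith : -1 ≤ t)]
  have hpow : t ^ ((1 : ℝ) / 2 - 1) = t ^ (-(3 : ℝ) / 2) * t := by
    rw [← rpow_add_one ht.ne']; norm_num
  rw [norm_of_nonneg (mul_nonneg hu (rpow_nonneg ht.le _)), hpow,
    show -((1 : ℝ) / 2 + 1 / 2) = -1 by norm_num, rpow_neg_one, mul_comm,
    show (p + 1) * (t ^ (-(3 : ℝ) / 2) * t * (1 + t)⁻¹) =
      t ^ (-(3 : ℝ) / 2) * ((p + 1) * t / (1 + t)) by ring]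
  gcongr
  rwa [le_div_iff₀ (by linarith)]

theorem integral_Ioi_one_sub_one_add_rpow_neg_mul_rpow {p : ℝ} (hp : 0 < p) :
    ∫ t in Ioi (0 : ℝ), (1 - (1 + t) ^ (-p)) * t ^ (-(3 : ℝ) / 2) =
      2 * sqrt π * Gamma (p + 1 / 2) / Gamma p := by
  set u : ℝ → ℝ := fun t => 1 - (1 + t) ^ (-p)
  set v : ℝ → ℝ := fun t => -2 * t ^ (-(1 / 2 : ℝ))
  have hu : ∀ t ∈ Ioi (0 : ℝ), HasDerivAt u (p * (1 + t) ^ (-p - 1)) t := fun t ht =>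
    hasDerivAt_one_sub_one_add_rpow_neg (by linarith [ht.out])
  have hv : ∀ t ∈ Ioi (0 : ℝ), HasDerivAt v (t ^ (-(3 : ℝ) / 2)) t := fun t ht =>
    ((hasDerivAt_rpow_const (Or.inl ht.out.ne')).const_mul (-2)).congr_deriv (by ring_nf)
  have hu'v : ∀ t, p * (1 + t) ^ (-p - 1) * v t =
      -2 * p * (t ^ ((1 : ℝ) / 2 - 1) * (1 + t) ^ (-(1 / 2 + (p + 1 / 2)))) := fun t => by
    simp only [v]
    ring_nf
  have hnorm : ∀ t > 0, ‖(u * v) t‖ = 2 * (u t * t ^ (-(1 / 2 : ℝ))) := fun t ht => by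
    rw [Pi.mul_apply, norm_mul, norm_of_nonneg (one_sub_one_add_rpow_neg_nonneg hp.le ht.le),
      norm_mul, norm_of_nonneg (rpow_nonneg ht.le _)]
    norm_num
    ring
  have h_zero : Tendsto (u * v) (𝓝[>] 0) (𝓝 0) := by
    refine squeeze_zero_norm' (a := fun t => 2 * p * t ^ (1 / 2 : ℝ)) ?_ ?_
    · filter_upwards [self_mem_nhdsWithin] with t (ht : 0 < t)
      rw [hnorm t ht, mul_assoc, show t ^ (1 / 2 : ℝ) = t * t ^ (-(1 / 2 : ℝ)) by
        rw [← rpow_one_add' ht.le (by norm_num)]; norm_num, ← mul_assoc p]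
      gcongr
      exact one_sub_one_add_rpow_neg_le_mul hp.le ht.le
    · have h := ((continuous_rpow_const (by norm_num : (0 : ℝ) ≤ 1 / 2)).tendsto 0).const_mul
        (2 * p)
      rw [zero_rpow (by norm_num), mul_zero] at h
      exact h.mono_left nhdsWithin_le_nhds
  have h_infty : Tendsto (u * v) atTop (𝓝 0) := by
    refine squeeze_zero_norm' (a := fun t => 2 * t ^ (-(1 / 2 : ℝ))) ?_ ?_
    · filter_upwards [eventually_gt_atTop 0] with t ht
      rw [hnorm t ht]
      gcongr
      exact mul_le_of_le_one_left (rpow_nonneg ht.le _)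
        (one_sub_one_add_rpow_neg_le_one (by linarith))
    · simpa using (tendsto_rpow_neg_atTop (by norm_num : (0 : ℝ) < 1 / 2)).const_mul 2
  rw [integral_Ioi_mul_deriv_eq_deriv_mul hu hv
      (integrableOn_one_sub_one_add_rpow_neg_mul_rpow hp.le)
      (IntegrableOn.congr_fun ((integrableOn_Ioi_rpow_mul_one_add_rpow (a := 1 / 2)
        (b := p + 1 / 2) (by norm_num) (by linarith)).const_mul (-2 * p))
        (fun t _ => (hu'v t).symm) measurableSet_Ioi)
      h_zero h_infty, funext hu'v, integral_const_mul,
    integral_Ioi_rpow_mul_one_add_rpow (by norm_num) (by linarith),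
    show (1 : ℝ) / 2 + (p + 1 / 2) = p + 1 by ring, Gamma_add_one hp.ne', Gamma_one_half_eq]
  field_simp [(Gamma_pos_of_pos hp).ne']
  ring

theorem integral_Ioi_comp_mul_left_mul_rpow (g : ℝ → ℝ) (s : ℝ) {a : ℝ} (ha : 0 < a) :
    ∫ t in Ioi (0 : ℝ), g (a * t) * t ^ s =
      a ^ (-(s + 1)) * ∫ t in Ioi (0 : ℝ), g t * t ^ s := by
  calc ∫ t in Ioi (0 : ℝ), g (a * t) * t ^ s
      = ∫ t in Ioi (0 : ℝ), a ^ (-s) * (g (a * t) * (a * t) ^ s) := by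
        refine setIntegral_congr_fun measurableSet_Ioi fun t ht => ?_
        rw [mul_rpow ha.le (le_of_lt ht), rpow_neg ha.le]
        field_simp
    _ = a ^ (-s) * (a⁻¹ * ∫ t in Ioi (0 : ℝ), g t * t ^ s) := by
        rw [integral_const_mul, integral_comp_mul_left_Ioi (fun t => g t * t ^ s) 0 ha, mul_zero,
          smul_eq_mul]
    _ = a ^ (-(s + 1)) * ∫ t in Ioi (0 : ℝ), g t * t ^ s := by
        rw [← rpow_neg_one, ← mul_assoc, ← rpow_add ha, neg_add]

theorem integral_Ioi_one_sub_one_add_mul_rpow_neg_mul_rpow {α p : ℝ} (hα : 0 < α)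
    (hp : 0 < p) :
    ∫ t in Ioi (0 : ℝ), (1 - (1 + α * t) ^ (-p)) * t ^ (-(3 : ℝ) / 2) =
      sqrt (4 * π * α) * Gamma (p + 1 / 2) / Gamma p := by
  rw [integral_Ioi_comp_mul_left_mul_rpow (fun t => 1 - (1 + t) ^ (-p)) _ hα,
    integral_Ioi_one_sub_one_add_rpow_neg_mul_rpow hp,
    show (4 : ℝ) * π * α = 2 ^ 2 * π * α by norm_num,
    sqrt_mul (by positivity), sqrt_mul (by positivity), sqrt_sq zero_le_two, sqrt_eq_rpow α]
  norm_num
  ring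

/-- For every positive real `α` and positive integer `d`,
`∫₀^∞ (1 - (1 + α t)^{-d/2}) t^{-3/2} dt = √(4πα) · Γ((d+1)/2) / Γ(d/2)`. -/
theorem upsilon_alpha_id (α : ℝ) (hα : 0 < α) (d : ℕ) (hd : 0 < d) :
    ∫ t in Set.Ioi (0 : ℝ), (1 - (1 + α * t) ^ (-(d : ℝ) / 2)) * t ^ (-(3 : ℝ) / 2) =
      Real.sqrt (4 * Real.pi * α) * Real.Gamma (((d : ℝ) + 1) / 2) / Real.Gamma ((d : ℝ) / 2) := by
  rw [neg_div, integral_Ioi_one_sub_one_add_mul_rpow_neg_mul_rpow hα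
    (div_pos (Nat.cast_pos.2 hd) two_pos), add_div]
end

section
/- Let Ω be a d×d real symmetric positive definite matrix. Then the matrix Ψ(Ω) := ∫₀^∞ t^{-1/2} det(I_d + tΩ)^{-1/2} (I_d + tΩ)^{-1} dt is a well-defined (finite) symmetric positive definite matrix, provided d ≥ 2. -/
/-!
For `t > 0` the integrand `t^{-1/2} det(I + tΩ)^{-1/2} (I + tΩ)⁻¹` is a positive multiple of the
inverse of the positive definite matrix `I + tΩ`, so it is positive definite; the entrywise
integral of an a.e. positive definite matrix function is positive definite, because its quadratic
form is the integral of the (a.e. positive) quadratic forms.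

Convergence: every entry of `(I + tΩ)⁻¹` has absolute value at most `1` since `I ≤ I + tΩ`, and
writing `det(I + tΩ) = ∏ (1 + t λᵢ)` over the eigenvalues `λᵢ > 0` of `Ω` gives
`1 ≤ det(I + tΩ)` and `t^d det Ω ≤ det(I + tΩ)`. So the integrand is `O(t^{-1/2})` at `0` and
`O(t^{-1/2 - d/2})` at `∞`, which is integrable for `d ≥ 2`.
-/

open MeasureTheory Matrix Set Filter Asymptotics Topology

theorem integral_pos_of_ae_pos {α : Type*} [MeasurableSpace α] {μ : Measure α} {f : α → ℝ}
    (hf : ∀ᵐ a ∂μ, 0 < f a) (hfi : Integrable f μ) (hμ : μ ≠ 0) : 0 < ∫ a, f a ∂μ := by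
  rw [integral_pos_iff_support_of_nonneg_ae (hf.mono fun _ h => h.le) hfi, pos_iff_ne_zero]
  refine fun h => hμ (ae_eq_bot.mp (eventually_false_iff_eq_bot.mp ?_))
  filter_upwards [measure_eq_zero_iff_ae_notMem.mp h, hf] with a h1 h2
  exact h1 h2.ne'

namespace Matrix

variable {n : Type*}

section Integral

variable [Fintype n] {α : Type*} [MeasurableSpace α] {μ : Measure α} {F : α → Matrix n n ℝ}

theorem dotProduct_mulVec_integral (hF : ∀ i j, Integrable (fun a => F a i j) μ) (x : n → ℝ) :
    x ⬝ᵥ (of fun i j => ∫ a, F a i j ∂μ) *ᵥ x = ∫ a, x ⬝ᵥ F a *ᵥ x ∂μ := by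
  simp only [dotProduct, mulVec, of_apply, Finset.mul_sum]
  rw [integral_finsetSum _ fun i _ => integrable_finsetSum _ fun j _ =>
    ((hF i j).mul_const _).const_mul _]
  refine Finset.sum_congr rfl fun i _ => ?_
  rw [integral_finsetSum _ fun j _ => ((hF i j).mul_const _).const_mul _]
  refine Finset.sum_congr rfl fun j _ => ?_
  rw [integral_const_mul, integral_mul_const]

theorem posDef_integral_of_ae_posDef (hF : ∀ i j, Integrable (fun a => F a i j) μ)
    (hpos : ∀ᵐ a ∂μ, (F a).PosDef) (hμ : μ ≠ 0) :
    (of fun i j => ∫ a, F a i j ∂μ).PosDef := by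
  refine PosDef.of_dotProduct_mulVec_pos ?_ fun x hx => ?_
  · ext i j
    refine integral_congr_ae (hpos.mono fun a ha => ?_)
    exact ha.isHermitian.apply i j
  · rw [star_trivial, dotProduct_mulVec_integral hF]
    refine integral_pos_of_ae_pos (hpos.mono fun a ha => ?_) ?_ hμ
    · simpa using ha.dotProduct_mulVec_pos hx
    · simp only [dotProduct, mulVec]
      fun_prop

end Integral

variable [DecidableEq n] {Ω : Matrix n n ℝ}

theorem PosSemidef.posDef_one_add_smul (hΩ : Ω.PosSemidef) {t : ℝ} (ht : 0 ≤ t) :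
    (1 + t • Ω).PosDef :=
  PosDef.one.add_posSemidef (hΩ.smul ht)

variable [Fintype n]

theorem abs_inv_apply_le_one {M : Matrix n n ℝ} (hM : (M - 1).PosSemidef) (i j : n) :
    |M⁻¹ i j| ≤ 1 := by
  have hunit : IsUnit M.det := by
    simpa using (PosDef.one.add_posSemidef hM).det_pos.ne'.isUnit
  -- For the column `z` of `M⁻¹`: `‖z‖² ≤ zᵀ M z = z j`, so `z j ≤ 1` and then `‖z‖ ≤ 1`.
  set z := M⁻¹ *ᵥ Pi.single j 1 with hz
  have hzi (k : n) : z k = M⁻¹ k j := by simp [z, mulVec_single]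
  have hMz : M *ᵥ z = Pi.single j 1 := by
    rw [hz, mulVec_mulVec, mul_nonsing_inv _ hunit, one_mulVec]
  have hnorm : z ⬝ᵥ z ≤ z j := by
    have := hM.dotProduct_mulVec_nonneg z
    simp only [star_trivial, sub_mulVec, one_mulVec, dotProduct_sub, hMz, dotProduct_single,
      mul_one] at this
    linarith
  have hcoord (k : n) : z k ^ 2 ≤ z ⬝ᵥ z := by
    rw [sq]
    exact Finset.single_le_sum (f := fun l => z l * z l) (fun l _ => mul_self_nonneg _)
      (Finset.mem_univ k)
  have hj : z j ≤ 1 := by nlinarith [hcoord j]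
  rw [← hzi, ← sq_le_one_iff_abs_le_one]
  exact (hcoord i).trans (hnorm.trans hj)

theorem IsHermitian.det_one_add_smul (hΩ : Ω.IsHermitian) (t : ℝ) :
    (1 + t • Ω).det = ∏ i, (1 + t * hΩ.eigenvalues i) := by
  have : 1 + t • Ω = cfc (fun x => 1 + t * x) Ω := by
    rw [cfc_add .., cfc_const_one .., cfc_const_mul .., cfc_id' ..]
  rw [this, hΩ.cfc_eq]
  simp [IsHermitian.cfc, -Unitary.conjStarAlgAut_apply]

theorem PosSemidef.one_le_det_one_add_smul (hΩ : Ω.PosSemidef) {t : ℝ} (ht : 0 ≤ t) :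
    1 ≤ (1 + t • Ω).det := by
  rw [hΩ.1.det_one_add_smul]
  exact Finset.one_le_prod fun i _ => by nlinarith [hΩ.eigenvalues_nonneg i]

theorem PosSemidef.pow_mul_det_le_det_one_add_smul (hΩ : Ω.PosSemidef) {t : ℝ} (ht : 0 ≤ t) :
    t ^ Fintype.card n * Ω.det ≤ (1 + t • Ω).det := by
  rw [hΩ.1.det_one_add_smul, hΩ.1.det_eq_prod_eigenvalues, ← Finset.card_univ,
    ← Finset.prod_const]
  simp only [RCLike.ofReal_real_eq_id, id, ← Finset.prod_mul_distrib]
  exact Finset.prod_le_prod (fun i _ => mul_nonneg ht (hΩ.eigenvalues_nonneg i))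
    fun i _ => by linarith

theorem PosSemidef.continuousOn_inv_one_add_smul (hΩ : Ω.PosSemidef) :
    ContinuousOn (fun t : ℝ => (1 + t • Ω)⁻¹) (Ici 0) := by
  intro t ht
  have hdet : (1 + t • Ω).det ≠ 0 := (hΩ.posDef_one_add_smul ht).det_pos.ne'
  refine ((continuousAt_matrix_inv _ ?_).comp (by fun_prop)).continuousWithinAt
  simpa [Ring.inverse_eq_inv'] using continuousAt_inv₀ hdet

theorem PosDef.det_one_add_smul_rpow_le (hΩ : Ω.PosDef) {t : ℝ} (ht : 0 < t) :
    (1 + t • Ω).det ^ (-(1 : ℝ) / 2) ≤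
      Ω.det ^ (-(1 : ℝ) / 2) * t ^ (-(Fintype.card n / 2 : ℝ)) := by
  have hpow : 0 < t ^ Fintype.card n * Ω.det := mul_pos (pow_pos ht _) hΩ.det_pos
  calc (1 + t • Ω).det ^ (-(1 : ℝ) / 2)
      ≤ (t ^ Fintype.card n * Ω.det) ^ (-(1 : ℝ) / 2) :=
        Real.rpow_le_rpow_of_nonpos hpow
          (hΩ.posSemidef.pow_mul_det_le_det_one_add_smul ht.le) (by norm_num)
    _ = Ω.det ^ (-(1 : ℝ) / 2) * t ^ (-(Fintype.card n / 2 : ℝ)) := by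
      rw [Real.mul_rpow (by positivity) hΩ.det_pos.le, ← Real.rpow_natCast,
        ← Real.rpow_mul ht.le, mul_comm]
      ring_nf

end Matrix

open Matrix

noncomputable def psiIntegrand {n : Type*} [Fintype n] [DecidableEq n] (Ω : Matrix n n ℝ)
    (t : ℝ) : Matrix n n ℝ :=
  (t ^ (-(1 : ℝ) / 2) * (1 + t • Ω).det ^ (-(1 : ℝ) / 2)) • (1 + t • Ω)⁻¹

variable {n : Type*} [Fintype n] [DecidableEq n] {Ω : Matrix n n ℝ}

theorem posDef_psiIntegrand (hΩ : Ω.PosSemidef) {t : ℝ} (ht : 0 < t) :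
    (psiIntegrand Ω t).PosDef :=
  (hΩ.posDef_one_add_smul ht.le).inv.smul <|
    mul_pos (Real.rpow_pos_of_pos ht _)
      (Real.rpow_pos_of_pos (hΩ.posDef_one_add_smul ht.le).det_pos _)

theorem integrableOn_psiIntegrand_apply (hn : 2 ≤ Fintype.card n) (hΩ : Ω.PosDef) (i j : n) :
    IntegrableOn (fun t => psiIntegrand Ω t i j) (Ioi 0) := by
  set g : ℝ → ℝ := fun t => (1 + t • Ω).det ^ (-(1 : ℝ) / 2) * (1 + t • Ω)⁻¹ i j
  have hdet_pos {t : ℝ} (ht : 0 < t) : 0 < (1 + t • Ω).det :=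
    (hΩ.posSemidef.posDef_one_add_smul ht.le).det_pos
  have hg_cont : ContinuousOn g (Ioi 0) := by
    have hdet : ContinuousOn (fun t : ℝ => (1 + t • Ω).det ^ (-(1 : ℝ) / 2)) (Ioi 0) :=
      fun t ht => ((by fun_prop : Continuous fun t : ℝ => (1 + t • Ω).det).continuousAt.rpow_const
        (Or.inl (hdet_pos ht).ne')).continuousWithinAt
    have hinv := hΩ.posSemidef.continuousOn_inv_one_add_smul.mono Ioi_subset_Ici_self
    exact hdet.mul ((continuous_apply_apply i j).comp_continuousOn hinv)
  have hg_le {t : ℝ} (ht : 0 < t) : ‖g t‖ ≤ (1 + t • Ω).det ^ (-(1 : ℝ) / 2) := by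
    rw [norm_mul, Real.norm_of_nonneg (Real.rpow_nonneg (hdet_pos ht).le _), Real.norm_eq_abs]
    exact mul_le_of_le_one_right (Real.rpow_nonneg (hdet_pos ht).le _)
      (abs_inv_apply_le_one (by simpa using hΩ.posSemidef.smul ht.le) i j)
  have hg_zero : g =O[𝓝[>] 0] (· ^ (-(0 : ℝ))) := by
    refine IsBigO.of_bound 1 (eventually_nhdsWithin_of_forall fun t (ht : 0 < t) => ?_)
    simpa using (hg_le ht).trans (Real.rpow_le_one_of_one_le_of_nonpos
      (hΩ.posSemidef.one_le_det_one_add_smul ht.le) (by norm_num))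
  have hg_top : g =O[atTop] (· ^ (-(Fintype.card n / 2 : ℝ))) := by
    refine IsBigO.of_bound (Ω.det ^ (-(1 : ℝ) / 2)) ((eventually_gt_atTop 0).mono fun t ht => ?_)
    rw [Real.norm_of_nonneg (Real.rpow_nonneg ht.le _)]
    exact (hg_le ht).trans (hΩ.det_one_add_smul_rpow_le ht)
  -- The integrand is `t ^ (s - 1) * g t` with `s = 1/2`: a convergent Mellin transform.
  refine (mellin_convergent_of_isBigO_scalar (s := 1 / 2)
    (hg_cont.locallyIntegrableOn measurableSet_Ioi) hg_top ?_ hg_zero (by norm_num)).congr_fun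
    (fun t _ => ?_) measurableSet_Ioi
  · have : (2 : ℝ) ≤ Fintype.card n := by exact_mod_cast hn
    linarith
  · simp only [psiIntegrand, Matrix.smul_apply, smul_eq_mul, g]
    norm_num
    ring

theorem psi_well_defined_posdef_general (d : ℕ) (hd : 2 ≤ d) (Ω : Matrix (Fin d) (Fin d) ℝ)
    (hpos : Ω.PosDef) :
    (∀ i j : Fin d,
        IntegrableOn
          (fun t : ℝ => t ^ (-(1 : ℝ) / 2) *
            ((1 : Matrix (Fin d) (Fin d) ℝ) + t • Ω).det ^ (-(1 : ℝ) / 2) *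
            (((1 : Matrix (Fin d) (Fin d) ℝ) + t • Ω)⁻¹ i j))
          (Set.Ioi (0 : ℝ))) ∧
      (Matrix.of fun i j : Fin d =>
          ∫ t in Set.Ioi (0 : ℝ), t ^ (-(1 : ℝ) / 2) *
            ((1 : Matrix (Fin d) (Fin d) ℝ) + t • Ω).det ^ (-(1 : ℝ) / 2) *
            (((1 : Matrix (Fin d) (Fin d) ℝ) + t • Ω)⁻¹ i j)).IsSymm ∧
      (Matrix.of fun i j : Fin d =>
          ∫ t in Set.Ioi (0 : ℝ), t ^ (-(1 : ℝ) / 2) *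
            ((1 : Matrix (Fin d) (Fin d) ℝ) + t • Ω).det ^ (-(1 : ℝ) / 2) *
            (((1 : Matrix (Fin d) (Fin d) ℝ) + t • Ω)⁻¹ i j)).PosDef := by
  have hint (i j : Fin d) : IntegrableOn (fun t => psiIntegrand Ω t i j) (Ioi 0) :=
    integrableOn_psiIntegrand_apply (by simpa using hd) hpos i j
  have hΨ : (of fun i j => ∫ t in Ioi 0, psiIntegrand Ω t i j).PosDef :=
    posDef_integral_of_ae_posDef hint
      (ae_restrict_of_forall_mem measurableSet_Ioi fun _ ht =>
        posDef_psiIntegrand hpos.posSemidef ht)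
      (by simp [Measure.restrict_eq_zero])
  exact ⟨hint, isHermitian_iff_isSymm.mp hΨ.isHermitian, hΨ⟩

/-- For a `d×d` real symmetric positive definite matrix `Ω` with `d ≥ 2`, the matrix
`Ψ(Ω) = ∫₀^∞ t^{-1/2} det(I + tΩ)^{-1/2} (I + tΩ)⁻¹ dt` (entrywise integral) is well defined
(the integrand is integrable on `(0,∞)` entrywise) and is symmetric positive definite. -/
theorem psi_well_defined_posdef (d : ℕ) (hd : 2 ≤ d) (Ω : Matrix (Fin d) (Fin d) ℝ)
    (hsym : Ω.IsSymm) (hpos : Ω.PosDef) :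
    (∀ i j : Fin d,
        IntegrableOn
          (fun t : ℝ => t ^ (-(1 : ℝ) / 2) *
            ((1 : Matrix (Fin d) (Fin d) ℝ) + t • Ω).det ^ (-(1 : ℝ) / 2) *
            (((1 : Matrix (Fin d) (Fin d) ℝ) + t • Ω)⁻¹ i j))
          (Set.Ioi (0 : ℝ))) ∧
      (Matrix.of fun i j : Fin d =>
          ∫ t in Set.Ioi (0 : ℝ), t ^ (-(1 : ℝ) / 2) *
            ((1 : Matrix (Fin d) (Fin d) ℝ) + t • Ω).det ^ (-(1 : ℝ) / 2) *
            (((1 : Matrix (Fin d) (Fin d) ℝ) + t • Ω)⁻¹ i j)).IsSymm ∧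
      (Matrix.of fun i j : Fin d =>
          ∫ t in Set.Ioi (0 : ℝ), t ^ (-(1 : ℝ) / 2) *
            ((1 : Matrix (Fin d) (Fin d) ℝ) + t • Ω).det ^ (-(1 : ℝ) / 2) *
            (((1 : Matrix (Fin d) (Fin d) ℝ) + t • Ω)⁻¹ i j)).PosDef :=
  psi_well_defined_posdef_general d hd Ω hpos
end

section
/- For a ≥ 2, the quantity Ω₂₂(a) := (1/|S²|) ∫_{S²} ω₂² / (a ω₁² + ω₂² + ω₃²) dω satisfies c · a^{-1/2} ≤ Ω₂₂(a) ≤ C · a^{-1/2} for absolute constants 0 < c ≤ C < ∞. -/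
/-! The integrand is invariant under scaling, so polar coordinates turn the sphere integral into
`3 ∫_{‖x‖<1} x₁² / (a x₀² + x₁² + x₂²) dx`. On a box inside the ball of width `1/(2√a)` in `x₀`
the integrand is at least `1/9`; on the cube `(-1, 1]³ ⊇ ball` it is at most `2 / (1 + a x₀²)`,
whose integral is `8 ∫₋₁¹ (1 + a t²)⁻¹ dt ≤ 8π/√a`. -/

open MeasureTheory Set Metric Real

local notation "ℝ³" => EuclideanSpace ℝ (Fin 3)

theorem integral_toSphere_eq_finrank_mul_setIntegral_ball {E : Type*} [NormedAddCommGroup E]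
    [NormedSpace ℝ E] [FiniteDimensional ℝ E] [MeasurableSpace E] [BorelSpace E]
    (μ : Measure E) [μ.IsAddHaarMeasure] {f : E → ℝ}
    (hf : ∀ c : ℝ, 0 < c → ∀ x, f (c • x) = f x) :
    ∫ ω : sphere (0 : E) 1, f ω ∂μ.toSphere =
      Module.finrank ℝ E * ∫ x in ball (0 : E) 1, f x ∂μ := by
  rcases subsingleton_or_nontrivial E with hE | hE
  · simp [(Measure.toSphere_eq_zero_iff μ).2 hE, Module.finrank_zero_of_subsingleton]
  set r₁ : Ioi (0 : ℝ) := ⟨1, mem_Ioi.2 one_pos⟩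
  have hG : ∀ x : ({0}ᶜ : Set E), f (homeomorphUnitSphereProd E x).1 *
      (Iio r₁).indicator 1 (homeomorphUnitSphereProd E x).2 = (ball 0 1).indicator f x := by
    rintro ⟨x, hx : x ≠ 0⟩
    have hfx : f (‖x‖⁻¹ • x) = f x := hf _ (inv_pos.2 (norm_pos_iff.2 hx)) x
    by_cases hb : ‖x‖ < 1 <;>
      simp [r₁, hfx, hb, indicator, ← Subtype.coe_lt_coe]
  have hradial : ∫ r, (Iio r₁).indicator 1 r ∂Measure.volumeIoiPow (Module.finrank ℝ E - 1) =
      (Module.finrank ℝ E : ℝ)⁻¹ := by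
    rw [integral_indicator_one measurableSet_Iio, measureReal_def, Measure.volumeIoiPow_apply_Iio,
      Nat.cast_pred Module.finrank_pos, sub_add_cancel, ENNReal.toReal_ofReal (by positivity)]
    simp [r₁]
  -- On `E \ {0}`, `μ = μ.toSphere ⊗ r ^ (dim - 1) dr`, and the ball is the part with `r < 1`.
  have key := μ.measurePreserving_homeomorphUnitSphereProd.integral_comp
    (Homeomorph.measurableEmbedding _)
    fun p => f p.1 * (Iio r₁).indicator 1 p.2
  rw [integral_congr_ae (.of_forall hG), integral_subtype_comap (measurableSet_singleton 0).compl,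
    restrict_compl_singleton, integral_indicator measurableSet_ball,
    integral_prod_mul (fun ω : sphere (0 : E) 1 => f ω) ((Iio r₁).indicator 1),
    hradial] at key
  rw [key, mul_left_comm, mul_inv_cancel₀ (Nat.cast_ne_zero.2 Module.finrank_pos.ne'), mul_one]

theorem setIntegral_preimage_ofLp_univ_pi_comp_zero {n : ℕ} (s : Fin (n + 1) → Set ℝ)
    (g : ℝ → ℝ) :
    ∫ x in WithLp.ofLp ⁻¹' univ.pi s, g (x 0)
        ∂(volume : Measure (EuclideanSpace ℝ (Fin (n + 1)))) =
      (∏ j : Fin n, volume.real (s j.succ)) * ∫ t in s 0, g t := by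
  rw [(PiLp.volume_preserving_ofLp _).setIntegral_preimage_emb
      (MeasurableEquiv.toLp 2 _).symm.measurableEmbedding (fun y => g (y 0)),
    volume_pi, Measure.restrict_pi_pi]
  have hprod : ∀ y : Fin (n + 1) → ℝ,
      g (y 0) = ∏ i, (Fin.cases g (fun _ _ => 1) i : ℝ → ℝ) (y i) := by
    intro y; simp [Fin.prod_univ_succ]
  simp_rw [hprod]
  rw [integral_fintype_prod_eq_prod, Fin.prod_univ_succ, mul_comm]
  simp [Measure.real]

theorem intervalIntegral_inv_one_add_mul_sq {a : ℝ} (ha : 0 < a) (b c : ℝ) :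
    ∫ t in b..c, (1 + a * t ^ 2)⁻¹ =
      (arctan (√a * c) - arctan (√a * b)) / √a := by
  have hsq : ∀ t : ℝ, 1 + a * t ^ 2 = 1 + (√a * t) ^ 2 := fun t => by
    rw [mul_pow, sq_sqrt ha.le]
  simp_rw [hsq]
  rw [intervalIntegral.integral_comp_mul_left (fun u => (1 + u ^ 2)⁻¹)
      (sqrt_pos.2 ha).ne', integral_inv_one_add_sq, smul_eq_mul, inv_mul_eq_div]

theorem intervalIntegral_inv_one_add_mul_sq_le {a : ℝ} (ha : 0 < a) (b c : ℝ) :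
    ∫ t in b..c, (1 + a * t ^ 2)⁻¹ ≤ π / √a := by
  rw [intervalIntegral_inv_one_add_mul_sq ha]
  gcongr
  linarith [arctan_lt_pi_div_two (√a * c), neg_pi_div_two_lt_arctan (√a * b)]

noncomputable def omega22Integrand (a : ℝ) (x : ℝ³) : ℝ :=
  x 1 ^ 2 / (a * x 0 ^ 2 + x 1 ^ 2 + x 2 ^ 2)

namespace omega22Integrand

variable {a : ℝ}

theorem smul (a : ℝ) {c : ℝ} (hc : c ≠ 0) (x : ℝ³) :
    omega22Integrand a (c • x) = omega22Integrand a x := by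
  have h : a * (c * x 0) ^ 2 + (c * x 1) ^ 2 + (c * x 2) ^ 2 =
      c ^ 2 * (a * x 0 ^ 2 + x 1 ^ 2 + x 2 ^ 2) := by ring
  simp only [omega22Integrand, PiLp.smul_apply, smul_eq_mul]
  rw [h, mul_pow, mul_div_mul_left _ _ (pow_ne_zero 2 hc)]

theorem nonneg (ha : 0 ≤ a) (x : ℝ³) : 0 ≤ omega22Integrand a x := by
  unfold omega22Integrand; positivity

theorem le_one (ha : 0 ≤ a) (x : ℝ³) : omega22Integrand a x ≤ 1 :=
  div_le_one_of_le₀ (by nlinarith [sq_nonneg (x 0), sq_nonneg (x 2)]) (by positivity)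

theorem measurable (a : ℝ) : Measurable (omega22Integrand a) := by
  unfold omega22Integrand; fun_prop

theorem integrableOn (ha : 0 ≤ a) {s : Set ℝ³} (hs : volume s ≠ ⊤) :
    IntegrableOn (omega22Integrand a) s :=
  Measure.integrableOn_of_bounded hs (measurable a).aestronglyMeasurable
    (.of_forall fun x => by
      rw [Real.norm_of_nonneg (nonneg ha x)]; exact le_one ha x) (M := 1)

theorem le_two_mul_inv (ha : 0 ≤ a) {x : ℝ³} (hx : x 1 ^ 2 ≤ 1) :
    omega22Integrand a x ≤ 2 * (1 + a * x 0 ^ 2)⁻¹ := by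
  have hax : 0 ≤ a * x 0 ^ 2 := by positivity
  rcases (show 0 ≤ a * x 0 ^ 2 + x 1 ^ 2 + x 2 ^ 2 by positivity).eq_or_lt with hD | hD
  · simp only [omega22Integrand, ← hD, div_zero]; positivity
  rw [omega22Integrand, ← div_eq_mul_inv, div_le_div_iff₀ hD (by positivity)]
  nlinarith [mul_le_mul_of_nonneg_left hx hax, sq_nonneg (x 2)]

theorem one_ninth_le (ha : 0 ≤ a) {x : ℝ³} (h0 : a * x 0 ^ 2 ≤ 1 / 16)
    (h1 : x 1 ∈ Icc (1 / 4 : ℝ) (1 / 2)) (h2 : x 2 ∈ Icc (1 / 4 : ℝ) (1 / 2)) :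
    1 / 9 ≤ omega22Integrand a x := by
  have hD : 0 < a * x 0 ^ 2 + x 1 ^ 2 + x 2 ^ 2 := by
    have : 0 ≤ a * x 0 ^ 2 := by positivity
    nlinarith [h1.1]
  rw [omega22Integrand, div_le_div_iff₀ (by norm_num) hD]
  nlinarith [h1.1, h1.2, h2.1, h2.2]

end omega22Integrand

noncomputable def lowerBox (r : ℝ) : Set ℝ³ :=
  WithLp.ofLp ⁻¹' univ.pi ![Icc (-r) r, Icc (1 / 4) (1 / 2), Icc (1 / 4) (1 / 2)]

namespace lowerBox

variable {r : ℝ} {x : ℝ³}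

theorem mem_iff : x ∈ lowerBox r ↔
    x 0 ∈ Icc (-r) r ∧ x 1 ∈ Icc (1 / 4 : ℝ) (1 / 2) ∧ x 2 ∈ Icc (1 / 4 : ℝ) (1 / 2) := by
  simp [lowerBox, Fin.forall_fin_succ]

theorem measurableSet (r : ℝ) : MeasurableSet (lowerBox r) :=
  (MeasurableSet.univ_pi fun i => by fin_cases i <;> exact measurableSet_Icc).preimage
    (by fun_prop)

theorem subset_ball (hr : r ≤ 1 / 4) : lowerBox r ⊆ ball 0 1 := by
  intro x hx
  obtain ⟨h0, h1, h2⟩ := mem_iff.1 hx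
  rw [mem_ball_zero_iff, ← sq_lt_one_iff₀ (norm_nonneg _), EuclideanSpace.norm_sq_eq,
    Fin.sum_univ_three]
  simp only [Real.norm_eq_abs, sq_abs]
  nlinarith [h0.1, h0.2, h1.1, h1.2, h2.1, h2.2]

theorem setIntegral_const (hr : 0 ≤ r) (c : ℝ) : ∫ _ in lowerBox r, c = r * c / 8 := by
  refine (setIntegral_preimage_ofLp_univ_pi_comp_zero (n := 2) _ fun _ => c).trans ?_
  simp only [Fin.prod_univ_two, Fin.succ_zero_eq_one, Fin.succ_one_eq_two, Matrix.cons_val,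
    integral_const, measureReal_restrict_apply_univ, Real.volume_real_Icc_of_le
      (by linarith : -r ≤ r), Real.volume_real_Icc_of_le (by norm_num : (1 / 4 : ℝ) ≤ 1 / 2),
    smul_eq_mul]
  ring

end lowerBox

theorem le_setIntegral_ball_omega22Integrand {a : ℝ} (ha : 1 ≤ a) :
    (288 * √a)⁻¹ ≤ ∫ x in ball (0 : ℝ³) 1, omega22Integrand a x := by
  have hsa : 1 ≤ √a := one_le_sqrt.2 ha
  set r := (4 * √a)⁻¹ with hr_def
  have hr : 0 < r ∧ r ≤ 1 / 4 := by
    refine ⟨by positivity, ?_⟩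
    rw [one_div, inv_le_inv₀ (by positivity) (by norm_num)]
    linarith
  have hsub := lowerBox.subset_ball hr.2
  have hfin : volume (lowerBox r) ≠ ⊤ := ((measure_mono hsub).trans_lt measure_ball_lt_top).ne
  have hlow : ∀ x ∈ lowerBox r, 1 / 9 ≤ omega22Integrand a x := by
    intro x hx
    obtain ⟨h0, h1, h2⟩ := lowerBox.mem_iff.1 hx
    refine omega22Integrand.one_ninth_le (by linarith) ?_ h1 h2
    calc a * x 0 ^ 2 ≤ a * r ^ 2 := mul_le_mul_of_nonneg_left (sq_le_sq' h0.1 h0.2) (by linarith)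
      _ = 1 / 16 := by
        rw [inv_pow, mul_pow, sq_sqrt (by linarith)]; field_simp; norm_num
  calc (288 * √a)⁻¹ = ∫ x in lowerBox r, (1 / 9 : ℝ) := by
        rw [lowerBox.setIntegral_const hr.1.le, hr_def]; field_simp; ring
    _ ≤ ∫ x in lowerBox r, omega22Integrand a x :=
      setIntegral_mono_on (integrableOn_const hfin)
        (omega22Integrand.integrableOn (by linarith) hfin) (lowerBox.measurableSet r) hlow
    _ ≤ ∫ x in ball (0 : ℝ³) 1, omega22Integrand a x :=
      setIntegral_mono_set (omega22Integrand.integrableOn (by linarith) measure_ball_lt_top.ne)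
        (.of_forall (omega22Integrand.nonneg (by linarith))) hsub.eventuallyLE

theorem setIntegral_ball_omega22Integrand_le {a : ℝ} (ha : 0 < a) :
    ∫ x in ball (0 : ℝ³) 1, omega22Integrand a x ≤ 8 * π / √a := by
  let cube : Set ℝ³ := WithLp.ofLp ⁻¹' univ.pi fun _ => Ioc (-1) 1
  have hcube : MeasurableSet cube :=
    (MeasurableSet.univ_pi fun _ => measurableSet_Ioc).preimage (by fun_prop)
  have hsub : ball 0 1 ⊆ cube := fun x hx i _ => by
    have := (PiLp.norm_apply_le x i).trans_lt (mem_ball_zero_iff.1 hx)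
    rw [Real.norm_eq_abs, abs_lt] at this
    exact ⟨this.1, this.2.le⟩
  have hfin : volume cube ≠ ⊤ := by
    rw [(PiLp.volume_preserving_ofLp _).measure_preimage
      (MeasurableSet.univ_pi fun _ => measurableSet_Ioc).nullMeasurableSet, volume_pi_pi]
    simp
  have hbound : ∀ x ∈ cube, omega22Integrand a x ≤ 2 * (1 + a * x 0 ^ 2)⁻¹ := fun x hx => by
    have h1 := hx 1 trivial
    exact omega22Integrand.le_two_mul_inv ha.le (by nlinarith [h1.1, h1.2])
  have hint : IntegrableOn (fun x : ℝ³ => 2 * (1 + a * x 0 ^ 2)⁻¹) cube :=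
    Measure.integrableOn_of_bounded hfin (by fun_prop) (M := 2) (.of_forall fun x => by
      have h1 : 1 ≤ 1 + a * x 0 ^ 2 := le_add_of_nonneg_right (by positivity)
      rw [Real.norm_of_nonneg (by positivity)]
      exact mul_le_of_le_one_right zero_le_two (inv_le_one_of_one_le₀ h1))
  calc ∫ x in ball (0 : ℝ³) 1, omega22Integrand a x
      ≤ ∫ x in cube, omega22Integrand a x :=
        setIntegral_mono_set (omega22Integrand.integrableOn ha.le hfin)
          (.of_forall (omega22Integrand.nonneg ha.le)) hsub.eventuallyLE
    _ ≤ ∫ x in cube, 2 * (1 + a * x 0 ^ 2)⁻¹ :=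
        setIntegral_mono_on (omega22Integrand.integrableOn ha.le hfin) hint hcube hbound
    _ = 8 * ∫ t in (-1)..1, (1 + a * t ^ 2)⁻¹ := by
        rw [setIntegral_preimage_ofLp_univ_pi_comp_zero _ fun t => 2 * (1 + a * t ^ 2)⁻¹,
          intervalIntegral.integral_of_le (by norm_num), integral_const_mul,
          Real.volume_real_Ioc_of_le (by norm_num)]
        norm_num
        ring
    _ ≤ 8 * (π / √a) := by gcongr; exact intervalIntegral_inv_one_add_mul_sq_le ha _ _
    _ = 8 * π / √a := by ring

theorem integral_toSphere_omega22Integrand (a : ℝ) :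
    ∫ ω : sphere (0 : ℝ³) 1,
        (ω : ℝ³) 1 ^ 2 / (a * (ω : ℝ³) 0 ^ 2 + (ω : ℝ³) 1 ^ 2 + (ω : ℝ³) 2 ^ 2)
        ∂(volume : Measure ℝ³).toSphere =
      3 * ∫ x in ball (0 : ℝ³) 1, omega22Integrand a x := by
  have h := integral_toSphere_eq_finrank_mul_setIntegral_ball volume
    fun c hc => omega22Integrand.smul a hc.ne'
  rwa [finrank_euclideanSpace_fin, Nat.cast_ofNat] at h

/-- For `a ≥ 2`, `Ω₂₂(a) = (1/|S²|)∫_{S²} ω₂²/(aω₁²+ω₂²+ω₃²) dω ≍ a^{-1/2}` with absolute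
constants, the sphere integral being taken with respect to the surface measure on the unit
sphere of `ℝ³` (here `volume.toSphere`), normalized by `|S²| = 4π`. -/
theorem sphere_integral_estimate :
    ∃ c C : ℝ, 0 < c ∧ 0 < C ∧
      ∀ a : ℝ, 2 ≤ a →
        c * a ^ (-(1 : ℝ) / 2) ≤
            (1 / (4 * Real.pi)) *
              (∫ ω : Metric.sphere (0 : EuclideanSpace ℝ (Fin 3)) 1,
                ((ω : EuclideanSpace ℝ (Fin 3)) 1) ^ 2 /
                  (a * ((ω : EuclideanSpace ℝ (Fin 3)) 0) ^ 2 +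
                    ((ω : EuclideanSpace ℝ (Fin 3)) 1) ^ 2 +
                    ((ω : EuclideanSpace ℝ (Fin 3)) 2) ^ 2)
                ∂((volume : Measure (EuclideanSpace ℝ (Fin 3))).toSphere)) ∧
          (1 / (4 * Real.pi)) *
              (∫ ω : Metric.sphere (0 : EuclideanSpace ℝ (Fin 3)) 1,
                ((ω : EuclideanSpace ℝ (Fin 3)) 1) ^ 2 /
                  (a * ((ω : EuclideanSpace ℝ (Fin 3)) 0) ^ 2 +
                    ((ω : EuclideanSpace ℝ (Fin 3)) 1) ^ 2 +
                    ((ω : EuclideanSpace ℝ (Fin 3)) 2) ^ 2)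
                ∂((volume : Measure (EuclideanSpace ℝ (Fin 3))).toSphere)) ≤
            C * a ^ (-(1 : ℝ) / 2) := by
  refine ⟨(384 * π)⁻¹, 6, by positivity, by norm_num, fun a ha => ?_⟩
  have hsa : 0 < √a := sqrt_pos.2 (by linarith)
  have hlow := le_setIntegral_ball_omega22Integrand (a := a) (by linarith)
  have hup := setIntegral_ball_omega22Integrand_le (a := a) (by linarith)
  rw [integral_toSphere_omega22Integrand, neg_div, rpow_neg (by linarith),
    ← sqrt_eq_rpow]
  set I := ∫ x in ball (0 : ℝ³) 1, omega22Integrand a x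
  constructor
  · calc (384 * π)⁻¹ * (√a)⁻¹ = 3 / (4 * π) * (288 * √a)⁻¹ := by field_simp; ring
      _ ≤ 3 / (4 * π) * I := by gcongr
      _ = 1 / (4 * π) * (3 * I) := by ring
  · calc 1 / (4 * π) * (3 * I) = 3 / (4 * π) * I := by ring
      _ ≤ 3 / (4 * π) * (8 * π / √a) := by gcongr
      _ = 6 * (√a)⁻¹ := by field_simp; ring
end
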